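/- arXiv:2002.12081 — 2 statements merged into one kernel-verified Lean document; each statement's English description precedes it below -/
import Mathlib

section
/- Assume there is an invertible X ∈ ℝ^{s×s} with ‖X^{−1}B_nX‖_∞ ≤ 1 for all n = 1,…,N. Then for every block vector W ∈ ℝ^{(N+1)s}, ‖M^{−1}W‖_X ≤ ‖W_0‖_X + ‖W_N‖_X + (N−1)·max_{1≤n≤N−1} ‖W_n‖_X (for N = 1 the last term is absent). In particular, the boundary blocks W_0 and W_N enter the bound with constant 2 while the interior blocks enter with the factor N. -/
open Matrix

/-- The block lower bidiagonal matrix `M` with blocks `M_{nn} = I_s`,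
`M_{n,n-1} = -B_n` (for `1 ≤ n ≤ N`) and `M_{nk} = 0` otherwise. -/
noncomputable def bigM (s N : ℕ) (B : ℕ → Matrix (Fin s) (Fin s) ℝ) :
    Matrix (Fin (N + 1) × Fin s) (Fin (N + 1) × Fin s) ℝ :=
  Matrix.of fun p q =>
    if (p.1 : ℕ) = (q.1 : ℕ) then (if p.2 = q.2 then 1 else 0)
    else if (p.1 : ℕ) = (q.1 : ℕ) + 1 then -(B (p.1 : ℕ) p.2 q.2) else 0

/-- The maximum norm `‖v‖_∞ = max_i |v_i|` of a vector. -/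
noncomputable def vnormInf {s : ℕ} (v : Fin s → ℝ) : ℝ := ⨆ i, |v i|

/-- The maximum row sum norm `‖A‖_∞ = max_i ∑_j |a_{ij}|` of a matrix. -/
noncomputable def mnormInf {s : ℕ} (A : Matrix (Fin s) (Fin s) ℝ) : ℝ :=
  ⨆ i, ∑ j, |A i j|

/-!
`M⁻¹W` is computed by forward substitution: `V₀ = W₀` and `Vₙ = Bₙ Vₙ₋₁ + Wₙ`. In the
coordinates of `X` this reads `X⁻¹Vₙ = (X⁻¹BₙX)(X⁻¹Vₙ₋₁) + X⁻¹Wₙ`, and since `X⁻¹BₙX` has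
`∞`-operator norm at most one, `‖Vₙ‖_X ≤ ‖Vₙ₋₁‖_X + ‖Wₙ‖_X`. Every block of `M⁻¹W` is therefore
bounded by `∑ₖ ‖Wₖ‖_X`, whose `N - 1` interior terms are at most their maximum.
-/

open Function

lemma le_sum_Iic_of_le_add {M : Type*} [AddCommMonoid M] [PartialOrder M] [IsOrderedAddMonoid M]
    {N : ℕ} {a c : Fin (N + 1) → M} (h0 : a 0 ≤ c 0)
    (hsucc : ∀ n : Fin N, a n.succ ≤ a n.castSucc + c n.succ) (n : Fin (N + 1)) :
    a n ≤ ∑ k ≤ n, c k := by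
  induction n using Fin.induction with
  | zero => rwa [← bot_eq_zero, Finset.Iic_bot, Finset.sum_singleton]
  | succ n ih =>
    have hIio : Finset.Iio n.succ = Finset.Iic n.castSucc := by
      ext k; simp [Fin.lt_def, Fin.le_def]
    rw [Finset.Iic_eq_cons_Iio, Finset.sum_cons, hIio, add_comm (c _)]
    exact (hsucc n).trans (add_le_add_left ih _)

lemma sum_le_zero_add_last_add_mul {N : ℕ} (f : Fin (N + 2) → ℝ) {S : ℝ}
    (hS : ∀ k : Fin N, f k.castSucc.succ ≤ S) : ∑ k, f k ≤ f 0 + f (Fin.last _) + N * S := by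
  rw [Fin.sum_univ_succ, Fin.sum_univ_castSucc, Fin.succ_last]
  have hinterior : ∑ k : Fin N, f k.castSucc.succ ≤ N * S := by
    simpa using Finset.sum_le_card_nsmul Finset.univ _ S fun k _ => hS k
  linarith

section InftyNorms

open scoped Matrix.Norms.Operator

lemma vnormInf_eq_norm {s : ℕ} (v : Fin s → ℝ) : vnormInf v = ‖v‖ := by
  refine le_antisymm (Real.iSup_le (fun i => ?_) (norm_nonneg v)) ?_
  · simpa using norm_le_pi_norm v i
  · refine (pi_norm_le_iff_of_nonneg (Real.iSup_nonneg fun i => abs_nonneg _)).2 fun i => ?_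
    exact le_ciSup (f := fun i => |v i|) (Set.finite_range _).bddAbove i

lemma mnormInf_eq_norm {s : ℕ} (A : Matrix (Fin s) (Fin s) ℝ) : mnormInf A = ‖A‖ := by
  rw [mnormInf, linfty_opNorm_def]
  have h0 : 0 ≤ ⨆ i, ∑ j, |A i j| :=
    Real.iSup_nonneg fun i => Finset.sum_nonneg fun j _ => abs_nonneg _
  refine le_antisymm (Real.iSup_le (fun i => ?_) (NNReal.coe_nonneg _)) ?_
  · simpa using
      NNReal.coe_le_coe.2 (Finset.le_sup (f := fun i => ∑ j, ‖A i j‖₊) (Finset.mem_univ i))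
  · rw [← Real.coe_toNNReal _ h0, NNReal.coe_le_coe]
    refine Finset.sup_le fun i _ => ?_
    rw [← NNReal.coe_le_coe, Real.coe_toNNReal _ h0]
    simpa using le_ciSup (f := fun i => ∑ j, |A i j|) (Set.finite_range _).bddAbove i

lemma inv_mulVec_mulVec_eq_conj_mulVec {s : ℕ} {X : Matrix (Fin s) (Fin s) ℝ} (hX : IsUnit X)
    (A : Matrix (Fin s) (Fin s) ℝ) (v : Fin s → ℝ) :
    X⁻¹ *ᵥ (A *ᵥ v) = (X⁻¹ * A * X) *ᵥ (X⁻¹ *ᵥ v) := by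
  rw [mulVec_mulVec, mulVec_mulVec,
    mul_nonsing_inv_cancel_right _ _ ((isUnit_iff_isUnit_det _).mp hX)]

lemma vnormInf_inv_mulVec_mulVec_add_le {s : ℕ} {X A : Matrix (Fin s) (Fin s) ℝ}
    (hX : IsUnit X) (hA : mnormInf (X⁻¹ * A * X) ≤ 1) (v w : Fin s → ℝ) :
    vnormInf (X⁻¹ *ᵥ (A *ᵥ v + w)) ≤ vnormInf (X⁻¹ *ᵥ v) + vnormInf (X⁻¹ *ᵥ w) := by
  rw [mnormInf_eq_norm] at hA
  simp only [vnormInf_eq_norm]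
  rw [mulVec_add, inv_mulVec_mulVec_eq_conj_mulVec hX]
  calc ‖(X⁻¹ * A * X) *ᵥ (X⁻¹ *ᵥ v) + X⁻¹ *ᵥ w‖
      ≤ ‖X⁻¹ * A * X‖ * ‖X⁻¹ *ᵥ v‖ + ‖X⁻¹ *ᵥ w‖ :=
        (norm_add_le _ _).trans (add_le_add_left (linfty_opNorm_mulVec _ _) _)
    _ ≤ ‖X⁻¹ *ᵥ v‖ + ‖X⁻¹ *ᵥ w‖ := by
        gcongr
        exact mul_le_of_le_one_left (norm_nonneg _) hA

end InftyNorms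

lemma bigM_mulVec_apply_zero {s N : ℕ} (B : ℕ → Matrix (Fin s) (Fin s) ℝ)
    (v : Fin (N + 1) × Fin s → ℝ) (i : Fin s) : (bigM s N B *ᵥ v) (0, i) = v (0, i) := by
  simp [bigM, mulVec, dotProduct, Fintype.sum_prod_type, Fin.sum_univ_succ]

lemma bigM_mulVec_apply_succ {s N : ℕ} (B : ℕ → Matrix (Fin s) (Fin s) ℝ)
    (v : Fin (N + 1) × Fin s → ℝ) (n : Fin N) (i : Fin s) :
    (bigM s N B *ᵥ v) (n.succ, i) = v (n.succ, i) - (B (n + 1) *ᵥ curry v n.castSucc) i := by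
  simp only [bigM, mulVec, dotProduct, Fintype.sum_prod_type]
  rw [Fintype.sum_eq_add n.succ n.castSucc Fin.castSucc_lt_succ.ne']
  · simp [sub_eq_add_neg, curry]
  · rintro m ⟨hm_succ, hm_castSucc⟩
    rw [Ne, Fin.ext_iff] at hm_succ hm_castSucc
    simp only [Fin.val_succ, Fin.val_castSucc] at hm_succ hm_castSucc
    simp [Ne.symm hm_succ, Ne.symm hm_castSucc]

lemma curry_zero_of_bigM_mulVec_eq {s N : ℕ} {B : ℕ → Matrix (Fin s) (Fin s) ℝ}
    {v w : Fin (N + 1) × Fin s → ℝ} (h : bigM s N B *ᵥ v = w) : curry v 0 = curry w 0 := by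
  funext i
  simp [curry, ← h, bigM_mulVec_apply_zero]

lemma curry_succ_of_bigM_mulVec_eq {s N : ℕ} {B : ℕ → Matrix (Fin s) (Fin s) ℝ}
    {v w : Fin (N + 1) × Fin s → ℝ} (h : bigM s N B *ᵥ v = w) (n : Fin N) :
    curry v n.succ = B (n + 1) *ᵥ curry v n.castSucc + curry w n.succ := by
  funext i
  simp only [curry, ← h, bigM_mulVec_apply_succ, Pi.add_apply]
  ring

lemma isUnit_bigM (s N : ℕ) (B : ℕ → Matrix (Fin s) (Fin s) ℝ) : IsUnit (bigM s N B) := by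
  refine mulVec_injective_iff_isUnit.mp fun v w hvw => ?_
  have hker : bigM s N B *ᵥ (v - w) = 0 := by rw [mulVec_sub, hvw, sub_self]
  have hblocks : ∀ n, curry (v - w) n = 0 := by
    refine Fin.induction ?_ fun n ih => ?_
    · exact curry_zero_of_bigM_mulVec_eq hker
    · rw [curry_succ_of_bigM_mulVec_eq hker, ih, mulVec_zero, zero_add]; rfl
  funext p
  exact sub_eq_zero.mp (congrFun (hblocks p.1) p.2)

lemma bigM_mulVec_inv_mulVec {s N : ℕ} (B : ℕ → Matrix (Fin s) (Fin s) ℝ)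
    (u : Fin (N + 1) × Fin s → ℝ) : bigM s N B *ᵥ ((bigM s N B)⁻¹ *ᵥ u) = u := by
  rw [mulVec_mulVec, mul_nonsing_inv _ ((isUnit_iff_isUnit_det _).mp (isUnit_bigM s N B)),
    one_mulVec]

lemma vnormInf_inv_mulVec_curry_bigM_inv_le {s N : ℕ} {B : ℕ → Matrix (Fin s) (Fin s) ℝ}
    {X : Matrix (Fin s) (Fin s) ℝ} (hX : IsUnit X)
    (hB : ∀ n : Fin N, mnormInf (X⁻¹ * B (n + 1) * X) ≤ 1) (W : Fin (N + 1) → Fin s → ℝ)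
    (n : Fin (N + 1)) :
    vnormInf (X⁻¹ *ᵥ curry ((bigM s N B)⁻¹ *ᵥ uncurry W) n) ≤
      ∑ k, vnormInf (X⁻¹ *ᵥ W k) := by
  have hsolve := bigM_mulVec_inv_mulVec B (uncurry W)
  calc _ ≤ ∑ k ≤ n, vnormInf (X⁻¹ *ᵥ W k) := by
        refine le_sum_Iic_of_le_add ?_ (fun k => ?_) n
          (a := fun k => vnormInf (X⁻¹ *ᵥ curry ((bigM s N B)⁻¹ *ᵥ uncurry W) k))
        · rw [curry_zero_of_bigM_mulVec_eq hsolve]; rfl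
        · simp only [curry_succ_of_bigM_mulVec_eq hsolve]
          exact vnormInf_inv_mulVec_mulVec_add_le hX (hB k) _ _
    _ ≤ ∑ k, vnormInf (X⁻¹ *ᵥ W k) :=
        Finset.sum_le_univ_sum_of_nonneg (f := fun k => vnormInf (X⁻¹ *ᵥ W k))
          fun k => Real.iSup_nonneg fun i => abs_nonneg _

theorem stmt4_general (s N : ℕ) (hN : 1 ≤ N)
    (B : ℕ → Matrix (Fin s) (Fin s) ℝ)
    (X : Matrix (Fin s) (Fin s) ℝ) (hX : IsUnit X)
    (hB : ∀ n : ℕ, 1 ≤ n → n ≤ N → mnormInf (X⁻¹ * B n * X) ≤ 1)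
    (W : Fin (N + 1) → Fin s → ℝ) :
    (⨆ n : Fin (N + 1),
        vnormInf (X⁻¹ *ᵥ fun i => ((bigM s N B)⁻¹ *ᵥ fun p => W p.1 p.2) (n, i)))
      ≤ vnormInf (X⁻¹ *ᵥ W 0) + vnormInf (X⁻¹ *ᵥ W (Fin.last N)) +
          ((N : ℝ) - 1) *
            ⨆ n : Fin (N + 1),
              (if 1 ≤ (n : ℕ) ∧ (n : ℕ) ≤ N - 1 then vnormInf (X⁻¹ *ᵥ W n) else 0) := by
  obtain ⟨N, rfl⟩ : ∃ N', N = N' + 1 := ⟨N - 1, by omega⟩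
  have hinterior : ∀ k : Fin N, vnormInf (X⁻¹ *ᵥ W k.castSucc.succ) ≤
      ⨆ n : Fin (N + 2),
        (if 1 ≤ (n : ℕ) ∧ (n : ℕ) ≤ N + 1 - 1 then vnormInf (X⁻¹ *ᵥ W n) else 0) := fun k =>
    le_ciSup_of_le (Set.finite_range _).bddAbove k.castSucc.succ (by simp)
  have hblocks := vnormInf_inv_mulVec_curry_bigM_inv_le hX (fun n => hB _ (by omega) (by omega)) W
  rw [Nat.cast_succ, add_sub_cancel_right]
  exact ciSup_le fun n => (hblocks n).trans (sum_le_zero_add_last_add_mul _ hinterior)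

/-- if there is an invertible `X` with `‖X⁻¹ B_n X‖_∞ ≤ 1` for
`n = 1,…,N`, then for every block vector `W`,
`‖M⁻¹W‖_X ≤ ‖W_0‖_X + ‖W_N‖_X + (N-1) · max_{1≤n≤N-1} ‖W_n‖_X`
(for `N = 1` the last term is absent): the boundary blocks enter with
constant 2 while the interior blocks enter with the factor `N`. -/
theorem stmt4 (s N : ℕ) (hs : 1 ≤ s) (hN : 1 ≤ N)
    (B : ℕ → Matrix (Fin s) (Fin s) ℝ)
    (X : Matrix (Fin s) (Fin s) ℝ) (hX : IsUnit X)
    (hB : ∀ n : ℕ, 1 ≤ n → n ≤ N → mnormInf (X⁻¹ * B n * X) ≤ 1)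
    (W : Fin (N + 1) → Fin s → ℝ) :
    (⨆ n : Fin (N + 1),
        vnormInf (X⁻¹ *ᵥ fun i => ((bigM s N B)⁻¹ *ᵥ fun p => W p.1 p.2) (n, i)))
      ≤ vnormInf (X⁻¹ *ᵥ W 0) + vnormInf (X⁻¹ *ᵥ W (Fin.last N)) +
          ((N : ℝ) - 1) *
            ⨆ n : Fin (N + 1),
              (if 1 ≤ (n : ℕ) ∧ (n : ℕ) ≤ N - 1 then vnormInf (X⁻¹ *ᵥ W n) else 0) :=
  stmt4_general s N hN B X hX hB W
end

section
/- Let the nodes c_1,…,c_s be pairwise distinct and symmetric with parameter ζ ∈ ℝ, i.e. Πc = ζ·1 − c. Then the extrapolation matrix Θ = V_s𝒫_sV_s^{−1} satisfies Π Θ Π = Θ^{−1}. -/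
/-!
Write `A(a, b)` for the matrix of `p(x) ↦ p(a x + b)` on monomial coefficients, so that
`V_q(e) A(a, b) = V_q(a e + b)` and `A(a, b) A(a', b') = A(a' a, a' b + b')`; in particular
`𝒫 = A(1, 1)`. Symmetry of the nodes says `Π V = V E` with `E = A(-1, ζ)`, hence
`Θ · ΠΘΠ = V (𝒫 E)² V⁻¹`, and `𝒫 E = A(-1, ζ - 1)` is the involution `x ↦ ζ - 1 - x`.
-/

open Matrix

/-- The Vandermonde matrix `V_q(c) ∈ ℝ^{s×q}` with entries `c_i^{j-1}`. -/
noncomputable def vand {s : ℕ} (c : Fin s → ℝ) (q : ℕ) : Matrix (Fin s) (Fin q) ℝ :=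
  Matrix.of fun i j => c i ^ (j : ℕ)

/-- The upper triangular Pascal matrix `𝒫_q` with entries `C(j-1, i-1)`. -/
noncomputable def pascal (q : ℕ) : Matrix (Fin q) (Fin q) ℝ :=
  Matrix.of fun i j => ((j : ℕ).choose (i : ℕ) : ℝ)

/-- The flip permutation matrix `Π ∈ ℝ^{s×s}`, with `Π_{ij} = 1` iff `j = s+1-i`. -/
noncomputable def flipPerm (s : ℕ) : Matrix (Fin s) (Fin s) ℝ :=
  Matrix.of fun i j => if (i : ℕ) + (j : ℕ) = s - 1 then 1 else 0

noncomputable def affineSubstMatrix (q : ℕ) (a b : ℝ) : Matrix (Fin q) (Fin q) ℝ :=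
  Matrix.of fun i j => ((j : ℕ).choose (i : ℕ) : ℝ) * a ^ (i : ℕ) * b ^ ((j : ℕ) - (i : ℕ))

lemma pascal_eq_affineSubstMatrix (q : ℕ) : pascal q = affineSubstMatrix q 1 1 := by
  ext i j
  simp [pascal, affineSubstMatrix]

lemma vand_mul_affineSubstMatrix {s : ℕ} (e : Fin s → ℝ) (q : ℕ) (a b : ℝ) :
    vand e q * affineSubstMatrix q a b = vand (fun i => a * e i + b) q := by
  ext i j
  simp only [mul_apply, vand, affineSubstMatrix, of_apply]
  rw [Fin.sum_univ_eq_sum_range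
      (fun k => e i ^ k * (((j : ℕ).choose k : ℝ) * a ^ k * b ^ ((j : ℕ) - k))),
    add_pow, ← Finset.sum_subset (Finset.range_subset_range.mpr j.isLt)]
  · exact Finset.sum_congr rfl fun k _ => by rw [mul_pow]; ring
  · intro k _ hk
    rw [Nat.choose_eq_zero_of_lt (by simpa using hk)]
    simp

lemma isUnit_det_vand {s : ℕ} {c : Fin s → ℝ} (hc : Function.Injective c) :
    IsUnit (vand c s).det :=
  isUnit_iff_ne_zero.mpr (det_vandermonde_ne_zero_iff.mpr hc)

lemma eq_of_vand_mul_eq {q : ℕ} {A B : Matrix (Fin q) (Fin q) ℝ}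
    (h : ∀ e : Fin q → ℝ, vand e q * A = vand e q * B) : A = B :=
  ((isUnit_iff_isUnit_det _).mpr (isUnit_det_vand (c := fun i : Fin q => (i : ℝ))
    fun _ _ h => Fin.ext (Nat.cast_injective h))).mul_right_inj.mp (h _)

lemma affineSubstMatrix_mul (q : ℕ) (a b a' b' : ℝ) :
    affineSubstMatrix q a b * affineSubstMatrix q a' b'
      = affineSubstMatrix q (a' * a) (a' * b + b') :=
  eq_of_vand_mul_eq fun e => by
    simp only [← Matrix.mul_assoc, vand_mul_affineSubstMatrix]
    congr 1
    funext i
    ring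

lemma affineSubstMatrix_one_zero (q : ℕ) : affineSubstMatrix q 1 0 = 1 :=
  eq_of_vand_mul_eq fun e => by simp [vand_mul_affineSubstMatrix]

lemma flipPerm_apply {s : ℕ} (i j : Fin s) : flipPerm s i j = if j = i.rev then 1 else 0 := by
  have := i.isLt
  simp only [flipPerm, of_apply, Fin.ext_iff, Fin.val_rev]
  congr 1
  exact propext (by omega)

lemma flipPerm_mul {s : ℕ} {n : Type*} (M : Matrix (Fin s) n ℝ) :
    flipPerm s * M = M.submatrix Fin.rev id := by
  ext i j
  simp [mul_apply, flipPerm_apply]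

lemma flipPerm_mulVec {s : ℕ} (v : Fin s → ℝ) : flipPerm s *ᵥ v = v ∘ Fin.rev := by
  ext i
  simp [mulVec, dotProduct, flipPerm_apply]

lemma flipPerm_mul_vand_of_symm {s : ℕ} {c : Fin s → ℝ} {ζ : ℝ}
    (hsym : flipPerm s *ᵥ c = fun i => ζ - c i) (q : ℕ) :
    flipPerm s * vand c q = vand c q * affineSubstMatrix q (-1) ζ := by
  rw [vand_mul_affineSubstMatrix, flipPerm_mul]
  rw [flipPerm_mulVec] at hsym
  ext i j
  have hi : c i.rev = ζ - c i := congrFun hsym i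
  simp [vand, hi, neg_add_eq_sub]

/-- for pairwise distinct nodes that are symmetric with parameter `ζ`
(`Πc = ζ·1 - c`), the extrapolation matrix `Θ = V_s 𝒫_s V_s⁻¹` satisfies
`Π Θ Π = Θ⁻¹`. -/
theorem stmt10 (s : ℕ) (c : Fin s → ℝ) (hc : Function.Injective c) (ζ : ℝ)
    (hsym : flipPerm s *ᵥ c = fun i => ζ - c i) :
    flipPerm s * (vand c s * pascal s * (vand c s)⁻¹) * flipPerm s
      = (vand c s * pascal s * (vand c s)⁻¹)⁻¹ := by
  set V := vand c s
  set E := affineSubstMatrix s (-1) ζ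
  have hV : IsUnit V.det := isUnit_det_vand hc
  have hflipV : flipPerm s * V = V * E := flipPerm_mul_vand_of_symm hsym s
  have hVinvFlip : V⁻¹ * flipPerm s = E * V⁻¹ := by
    rw [← nonsing_inv_mul_cancel_left V E hV, ← hflipV, Matrix.mul_assoc,
      mul_nonsing_inv_cancel_right V _ hV]
  have hinvol : pascal s * E * (pascal s * E) = 1 := by
    simp only [E, pascal_eq_affineSubstMatrix, affineSubstMatrix_mul]
    norm_num [affineSubstMatrix_one_zero]
  refine (inv_eq_right_inv ?_).symm
  calc V * pascal s * V⁻¹ * (flipPerm s * (V * pascal s * V⁻¹) * flipPerm s)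
      = V * pascal s * (V⁻¹ * (flipPerm s * V)) * pascal s * (V⁻¹ * flipPerm s) := by
        simp only [Matrix.mul_assoc]
    _ = V * (pascal s * E * (pascal s * E)) * V⁻¹ := by
        rw [hflipV, hVinvFlip, nonsing_inv_mul_cancel_left V _ hV]
        simp only [Matrix.mul_assoc]
    _ = 1 := by rw [hinvol, Matrix.mul_one, mul_nonsing_inv _ hV]
end
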